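/- Let F be an outward pointing field of arrows on A_{n+1} and let B be the union, over all lattice squares S, of the two sides of S lying in the direction that the arrow of S points. Then every connected component of A_{n+1} \ B is the interior of either a 1×2 (or 2×1) rectangle or a 2×2 square, and the 2×2 square components are exactly the 2×2 squares centered at repelling nodes of F. -/

import Mathlib

/-- A unit lattice square with lower-left corner `c` belongs to the Aztec diamond of
order `m` iff it intersects the open region `{(x,y) : |x|+|y| < m}`; equivalently the
distance-to-origin data of the cell satisfies this inequality. -/
def aztecCell (m : ℕ) (c : ℤ × ℤ) : Prop :=
  max c.1 (-c.1 - 1) + max c.2 (-c.2 - 1) < (m : ℤ)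

instance (m : ℕ) : DecidablePred (aztecCell m) := fun c => by
  unfold aztecCell; infer_instance

/-- Two unit lattice squares are adjacent (form a domino) iff they share a full edge. -/
def Adjacent (c d : ℤ × ℤ) : Prop :=
  (c.1 = d.1 ∧ |c.2 - d.2| = 1) ∨ (c.2 = d.2 ∧ |c.1 - d.1| = 1)

/-- A domino tiling of the Aztec diamond of order `m`, encoded as the involution
matching each unit square of the region with the other half of its domino,
and fixing everything outside the region. -/
def IsTiling (m : ℕ) (t : ℤ × ℤ → ℤ × ℤ) : Prop :=
  (∀ c, aztecCell m c → aztecCell m (t c) ∧ t (t c) = c ∧ Adjacent c (t c)) ∧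
  (∀ c, ¬ aztecCell m c → t c = c)

/-- `p` is a lattice point of the Aztec diamond of order `m` (a corner of one of its cells). -/
def aztecPoint (m : ℕ) (p : ℤ × ℤ) : Prop :=
  max (|p.1| - 1) 0 + max (|p.2| - 1) 0 < (m : ℤ)

instance (m : ℕ) : DecidablePred (aztecPoint m) := fun p => by
  unfold aztecPoint; infer_instance

/-- A node: a lattice point `(i,j)` of `A_{n+1}` with `i + j ≡ n (mod 2)`. -/
def IsNode (n : ℕ) (p : ℤ × ℤ) : Prop :=
  aztecPoint (n + 1) p ∧ (p.1 + p.2 - (n : ℤ)) % 2 = 0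

/-- An interior node: a node contained in `A_n`. -/
def InteriorNode (n : ℕ) (p : ℤ × ℤ) : Prop :=
  IsNode n p ∧ aztecPoint n p

/-- `p` is a corner of the unit square with lower-left corner `c`. -/
def SqCorner (c p : ℤ × ℤ) : Prop :=
  (p.1 = c.1 ∨ p.1 = c.1 + 1) ∧ (p.2 = c.2 ∨ p.2 = c.2 + 1)

instance (c p : ℤ × ℤ) : Decidable (SqCorner c p) := by
  unfold SqCorner; infer_instance

/-- The two corners of the lattice square `c` that are nodes; they are diagonally opposite. -/
def cellDiag (n : ℕ) (c : ℤ × ℤ) : (ℤ × ℤ) × (ℤ × ℤ) :=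
  if (c.1 + c.2 - (n : ℤ)) % 2 = 0 then (c, (c.1 + 1, c.2 + 1))
  else ((c.1 + 1, c.2), (c.1, c.2 + 1))

/-- `A` assigns to each lattice square the head of its arrow.  An interior node `N` is
attracting if all four adjacent arrows point towards `N`. -/
def Attracting (A : ℤ × ℤ → ℤ × ℤ) (N : ℤ × ℤ) : Prop :=
  A (N.1 - 1, N.2 - 1) = N ∧ A (N.1, N.2 - 1) = N ∧ A (N.1 - 1, N.2) = N ∧ A N = N

/-- An interior node `N` is repelling if all four adjacent arrows point away from `N`
(towards the opposite corner of the respective square). -/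
def Repelling (A : ℤ × ℤ → ℤ × ℤ) (N : ℤ × ℤ) : Prop :=
  A (N.1 - 1, N.2 - 1) = (N.1 - 1, N.2 - 1) ∧ A (N.1, N.2 - 1) = (N.1 + 1, N.2 - 1) ∧
  A (N.1 - 1, N.2) = (N.1 - 1, N.2 + 1) ∧ A N = (N.1 + 1, N.2 + 1)

/-- An interior node `N` is transient if any two collinear arrows adjacent to `N`
point in the same direction. -/
def Transient (A : ℤ × ℤ → ℤ × ℤ) (N : ℤ × ℤ) : Prop :=
  ((A (N.1 - 1, N.2 - 1) = N) ↔ (A N = (N.1 + 1, N.2 + 1))) ∧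
  ((A (N.1, N.2 - 1) = N) ↔ (A (N.1 - 1, N.2) = (N.1 - 1, N.2 + 1)))

/-- A field of arrows on `A_{n+1}`: in each lattice square an arrow joining its two
corner nodes, such that every interior node is attracting, repelling or transient. -/
def IsArrowField (n : ℕ) (A : ℤ × ℤ → ℤ × ℤ) : Prop :=
  (∀ c, aztecCell (n + 1) c → A c = (cellDiag n c).1 ∨ A c = (cellDiag n c).2) ∧
  (∀ N, InteriorNode n N → Attracting A N ∨ Repelling A N ∨ Transient A N)

/-- A boundary square: a lattice square of `A_{n+1}` not contained in `A_n`. -/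
def BoundaryCell (n : ℕ) (c : ℤ × ℤ) : Prop := aztecCell (n + 1) c ∧ ¬ aztecCell n c

/-- The field points outward: in every boundary square the arrow points towards the
corner node on the boundary of `A_{n+1}` (i.e. not an interior node). -/
def Outward (n : ℕ) (A : ℤ × ℤ → ℤ × ℤ) : Prop :=
  ∀ c, BoundaryCell n c → ¬ aztecPoint n (A c)

/-- The field points inward: in every boundary square the arrow points towards the
interior node. -/
def Inward (n : ℕ) (A : ℤ × ℤ → ℤ × ℤ) : Prop :=
  ∀ c, BoundaryCell n c → aztecPoint n (A c)

/-- The number of repelling interior nodes of a field of arrows. -/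
noncomputable def repCount (n : ℕ) (A : ℤ × ℤ → ℤ × ℤ) : ℕ :=
  Set.ncard {N : ℤ × ℤ | InteriorNode n N ∧ Repelling A N}

/-- The field of arrows associated to a tiling: in each lattice square the arrow points
towards the corner node of the domino containing that square (the node corner of the
square which is not a corner of its partner square). -/
def tilingArrow (n : ℕ) (t : ℤ × ℤ → ℤ × ℤ) (c : ℤ × ℤ) : ℤ × ℤ :=
  if SqCorner (t c) (cellDiag n c).1 then (cellDiag n c).2 else (cellDiag n c).1

/-- The closed unit square of the plane corresponding to the cell `c`. -/
def cellRegion (c : ℤ × ℤ) : Set (ℝ × ℝ) :=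
  Set.Icc (c.1 : ℝ) (c.1 + 1) ×ˢ Set.Icc (c.2 : ℝ) (c.2 + 1)

/-- The Aztec diamond of order `m` as a subset of the plane. -/
def aztecRegion (m : ℕ) : Set (ℝ × ℝ) :=
  ⋃ c ∈ {c : ℤ × ℤ | aztecCell m c}, cellRegion c

/-- The union `B` over all lattice squares `S` of `A_{n+1}` of the two sides of `S`
meeting at the corner towards which the arrow of `S` points. -/
def boldLines (n : ℕ) (A : ℤ × ℤ → ℤ × ℤ) : Set (ℝ × ℝ) :=
  ⋃ c ∈ {c : ℤ × ℤ | aztecCell (n + 1) c},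
    (Set.Icc (c.1 : ℝ) (c.1 + 1) ×ˢ ({((A c).2 : ℝ)} : Set ℝ) ∪
      ({((A c).1 : ℝ)} : Set ℝ) ×ˢ Set.Icc (c.2 : ℝ) (c.2 + 1))

/-!
Outwardness forces the tail of every arrow to be an interior node `T`, from which that cell points
away; so `T` is not attracting. The cells around `T` pointing away from it form the `2×2` square
around `T` if `T` is repelling, and a domino if `T` is transient. All sides of this union not
incident to `T` are bold, while no segment at `T` inside it is, so its interior is a whole
component of `A_{n+1} \ B`. Finally, a point of `A_{n+1} \ B` in a closed cell avoids the bold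
sides of that cell, so it is joined to the centre of the cell through the open cell.
-/

open Set

variable {n : ℕ} {A : ℤ × ℤ → ℤ × ℤ} {u v : ℤ}

theorem aztecCell_iff {m : ℕ} {a b : ℤ} : aztecCell m (a, b) ↔
    a + b < m ∧ a - b - 1 < m ∧ b - a - 1 < m ∧ -a - b - 2 < m := by
  unfold aztecCell; rw [max_def, max_def]; split_ifs <;> omega

theorem aztecPoint_iff {m : ℕ} {a b : ℤ} : aztecPoint m (a, b) ↔
    a + b - 2 < m ∧ a - b - 2 < m ∧ b - a - 2 < m ∧ -a - b - 2 < m ∧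
      a - 1 < m ∧ -a - 1 < m ∧ b - 1 < m ∧ -b - 1 < m ∧ 0 < m := by
  unfold aztecPoint; rw [abs_eq_max_neg, abs_eq_max_neg]; simp only [max_def]; split_ifs <;> omega

/-- The corner of the cell `c` diagonally opposite to its corner `p`. -/
def oppCorner (c p : ℤ × ℤ) : ℤ × ℤ := (2 * c.1 + 1 - p.1, 2 * c.2 + 1 - p.2)

theorem sqCorner_iff {a b : ℤ} :
    SqCorner (a, b) (u, v) ↔ (a = u - 1 ∨ a = u) ∧ (b = v - 1 ∨ b = v) := by
  simp only [SqCorner]; omega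

theorem IsArrowField.head_cases (hA : IsArrowField n A) {a b : ℤ} (hc : aztecCell (n + 1) (a, b)) :
    ((a + b - n) % 2 = 0 ∧ (A (a, b) = (a, b) ∨ A (a, b) = (a + 1, b + 1))) ∨
    ((a + b - n) % 2 ≠ 0 ∧ (A (a, b) = (a + 1, b) ∨ A (a, b) = (a, b + 1))) := by
  have h := hA.1 (a, b) hc
  unfold cellDiag at h
  split_ifs at h with hp
  exacts [Or.inl ⟨hp, h⟩, Or.inr ⟨hp, h⟩]

theorem IsArrowField.sqCorner_head (hA : IsArrowField n A) {c : ℤ × ℤ} (hc : aztecCell (n + 1) c) :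
    SqCorner c (A c) := by
  obtain ⟨a, b⟩ := c
  rcases hA.head_cases hc with ⟨-, h | h⟩ | ⟨-, h | h⟩ <;> simp [SqCorner, h]

/-- The tail of every arrow is an interior node: for a boundary cell the head lies outside
`A_n`, and a cell of `A_{n+1}` cannot have two opposite corners outside `A_n`. -/
theorem interiorNode_oppCorner_head (hA : IsArrowField n A) (hout : Outward n A) (hn : 1 ≤ n)
    {c : ℤ × ℤ} (hc : aztecCell (n + 1) c) : InteriorNode n (oppCorner c (A c)) := by
  obtain ⟨a, b⟩ := c
  have hcorner : aztecCell n (a, b) ∨ ¬ aztecPoint n (A (a, b)) := by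
    by_cases hin : aztecCell n (a, b)
    exacts [Or.inl hin, Or.inr (hout _ ⟨hc, hin⟩)]
  rw [aztecCell_iff] at hc hcorner
  rcases hA.head_cases (aztecCell_iff.2 hc) with ⟨hp, h | h⟩ | ⟨hp, h | h⟩ <;>
  · simp only [InteriorNode, IsNode, oppCorner, h, aztecPoint_iff] at hcorner ⊢
    omega

theorem InteriorNode.aztecCell (hN : InteriorNode n (u, v)) {c : ℤ × ℤ} (hc : SqCorner c (u, v)) :
    aztecCell (n + 1) c := by
  obtain ⟨⟨-, hp⟩, hN⟩ := hN
  obtain ⟨a, b⟩ := c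
  simp only [SqCorner, aztecPoint_iff] at hc hN hp
  rw [aztecCell_iff]; omega

theorem InteriorNode.head_eq (hA : IsArrowField n A) (hN : InteriorNode n (u, v))
    {c : ℤ × ℤ} (hc : SqCorner c (u, v)) : A c = (u, v) ∨ A c = oppCorner c (u, v) := by
  obtain ⟨a, b⟩ := c
  have hp := hN.1.2
  have hab := sqCorner_iff.1 hc
  rcases hA.head_cases (hN.aztecCell hc) with ⟨hq, h | h⟩ | ⟨hq, h | h⟩ <;>
  · simp only [h, oppCorner, Prod.ext_iff]; omega

theorem Attracting.head_eq (h : Attracting A (u, v)) {c : ℤ × ℤ} (hc : SqCorner c (u, v)) :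
    A c = (u, v) := by
  obtain ⟨a, b⟩ := c
  obtain ⟨rfl | rfl, rfl | rfl⟩ := sqCorner_iff.1 hc
  exacts [h.1, h.2.2.1, h.2.1, h.2.2.2]

theorem Repelling.head_eq (h : Repelling A (u, v)) {c : ℤ × ℤ} (hc : SqCorner c (u, v)) :
    A c = oppCorner c (u, v) := by
  obtain ⟨a, b⟩ := c
  obtain ⟨h1, h2, h3, h4⟩ := h
  obtain ⟨rfl | rfl, rfl | rfl⟩ := sqCorner_iff.1 hc <;>
    simp only [oppCorner, h1, h2, h3, h4, Prod.mk.injEq] <;> constructor <;> ring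

/-- Here `2 * u - 1 - a` and `2 * v - 1 - b` are the column and the row around `(u, v)` other
than `a` and `b`. -/
theorem Transient.away_domino (hA : IsArrowField n A) {a b : ℤ} (hN : InteriorNode n (u, v))
    (htr : Transient A (u, v)) (hc : SqCorner (a, b) (u, v))
    (haway : A (a, b) = oppCorner (a, b) (u, v)) :
    (∀ a', (a' = u - 1 ∨ a' = u) →
      A (a', b) = oppCorner (a', b) (u, v) ∧ A (a', 2 * v - 1 - b) = (u, v)) ∨
    (∀ b', (b' = v - 1 ∨ b' = v) →
      A (a, b') = oppCorner (a, b') (u, v) ∧ A (2 * u - 1 - a, b') = (u, v)) := by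
  have hab := sqCorner_iff.1 hc
  have key : A (2 * u - 1 - a, 2 * v - 1 - b) = (u, v) ∧
      (A (2 * u - 1 - a, b) = oppCorner (2 * u - 1 - a, b) (u, v) ∧
          A (a, 2 * v - 1 - b) = (u, v) ∨
        A (2 * u - 1 - a, b) = (u, v) ∧
          A (a, 2 * v - 1 - b) = oppCorner (a, 2 * v - 1 - b) (u, v)) := by
    have hd : ∀ a' b', (a' = u - 1 ∨ a' = u) → (b' = v - 1 ∨ b' = v) →
        A (a', b') = (u, v) ∨ A (a', b') = oppCorner (a', b') (u, v) := fun a' b' ha hb =>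
      hN.head_eq hA (sqCorner_iff.2 ⟨ha, hb⟩)
    have d1 := hd (u - 1) (v - 1) (by omega) (by omega)
    have d2 := hd u (v - 1) (by omega) (by omega)
    have d3 := hd (u - 1) v (by omega) (by omega)
    have d4 := hd u v (by omega) (by omega)
    obtain ⟨t1, t2⟩ := htr
    rcases hab with ⟨rfl | rfl, rfl | rfl⟩ <;> simp only [oppCorner, Prod.ext_iff] at * <;>
      ring_nf at * <;> omega
  obtain ⟨hopp, ⟨hh, hv⟩ | ⟨hh, hv⟩⟩ := key
  · refine Or.inl fun a' ha' => ?_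
    obtain rfl | rfl : a' = a ∨ a' = 2 * u - 1 - a := by omega
    exacts [⟨haway, hv⟩, ⟨hh, hopp⟩]
  · refine Or.inr fun b' hb' => ?_
    obtain rfl | rfl : b' = b ∨ b' = 2 * v - 1 - b := by omega
    exacts [⟨haway, hh⟩, ⟨hv, hopp⟩]

theorem connectedComponentIn_eq_of_closure_inter_subset {X : Type*} [TopologicalSpace X]
    {S R : Set X} {x : X} (hRo : IsOpen R) (hRc : IsPreconnected R) (hRS : R ⊆ S)
    (hcl : closure R ∩ S ⊆ R) (hx : x ∈ R) : connectedComponentIn S x = R :=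
  subset_antisymm
    (isPreconnected_connectedComponentIn.subset_of_closure_inter_subset hRo
      ⟨x, mem_connectedComponentIn (hRS hx), hx⟩
      fun _ hy => hcl ⟨hy.1, connectedComponentIn_subset S x hy.2⟩)
    (hRc.subset_connectedComponentIn hx hRS)

theorem exists_unit_Icc_containing {r s : ℤ} (hrs : r < s) {y : ℝ} (hr : (r : ℝ) ≤ y) (hs : y ≤ s) :
    ∃ b : ℤ, r ≤ b ∧ b < s ∧ (b : ℝ) ≤ y ∧ y ≤ b + 1 := by
  refine ⟨min ⌊y⌋ (s - 1), le_min (Int.le_floor.2 hr) (by omega), by omega, ?_, ?_⟩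
  · exact (Int.cast_le.2 (min_le_left _ _)).trans (Int.floor_le y)
  · rcases le_total ⌊y⌋ (s - 1) with h | h
    · rw [min_eq_left h]; exact (Int.lt_floor_add_one y).le
    · rw [min_eq_right h]; push_cast; linarith

theorem mem_aztecRegion {m : ℕ} {x : ℝ × ℝ} :
    x ∈ aztecRegion m ↔ ∃ c, aztecCell m c ∧ x ∈ cellRegion c := by
  simp [aztecRegion]

theorem mem_boldLines {x : ℝ × ℝ} :
    x ∈ boldLines n A ↔ ∃ c, aztecCell (n + 1) c ∧
      ((c.1 : ℝ) ≤ x.1 ∧ x.1 ≤ c.1 + 1 ∧ x.2 = (A c).2 ∨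
        x.1 = (A c).1 ∧ (c.2 : ℝ) ≤ x.2 ∧ x.2 ≤ c.2 + 1) := by
  simp only [boldLines, mem_iUnion, mem_ofPred_eq, mem_union, mem_prod, mem_Icc,
    mem_singleton_iff, exists_prop, and_assoc]

section Rectangle

variable {p q r s : ℤ}

theorem rect_subset_aztecRegion (hpq : p < q) (hrs : r < s)
    (hcell : ∀ a b, p ≤ a → a < q → r ≤ b → b < s → aztecCell (n + 1) (a, b)) :
    Ioo (p : ℝ) q ×ˢ Ioo (r : ℝ) s ⊆ aztecRegion (n + 1) := by
  rintro x ⟨⟨hx1, hx2⟩, hx3, hx4⟩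
  obtain ⟨a, ha1, ha2, ha3, ha4⟩ := exists_unit_Icc_containing hpq hx1.le hx2.le
  obtain ⟨b, hb1, hb2, hb3, hb4⟩ := exists_unit_Icc_containing hrs hx3.le hx4.le
  exact mem_aztecRegion.2 ⟨(a, b), hcell a b ha1 ha2 hb1 hb2, ⟨ha3, ha4⟩, hb3, hb4⟩

/-- A bold side can only cross the open rectangle if it belongs to a cell inside it whose head
is not on the boundary lines of the rectangle. -/
theorem disjoint_rect_boldLines (hA : IsArrowField n A)
    (hhead : ∀ a b, p ≤ a → a < q → r ≤ b → b < s → aztecCell (n + 1) (a, b) →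
      ((A (a, b)).1 = p ∨ (A (a, b)).1 = q) ∧ ((A (a, b)).2 = r ∨ (A (a, b)).2 = s)) :
    Disjoint (Ioo (p : ℝ) q ×ˢ Ioo (r : ℝ) s) (boldLines n A) := by
  rw [Set.disjoint_left]
  rintro x ⟨⟨hx1, hx2⟩, hx3, hx4⟩ hB
  obtain ⟨⟨a, b⟩, hc, ⟨h1, h2, h3⟩ | ⟨h1, h2, h3⟩⟩ := mem_boldLines.1 hB
  · have ha1 : p < a + 1 := by exact_mod_cast hx1.trans_le h2
    have ha2 : a < q := by exact_mod_cast h1.trans_lt hx2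
    rw [h3] at hx3 hx4
    have hy1 : r < (A (a, b)).2 := by exact_mod_cast hx3
    have hy2 : (A (a, b)).2 < s := by exact_mod_cast hx4
    have hb := (hA.sqCorner_head hc).2
    have := (hhead a b (by omega) ha2 (by omega) (by omega) hc).2
    omega
  · have hb1 : r < b + 1 := by exact_mod_cast hx3.trans_le h3
    have hb2 : b < s := by exact_mod_cast h2.trans_lt hx4
    rw [h1] at hx1 hx2
    have hy1 : p < (A (a, b)).1 := by exact_mod_cast hx1
    have hy2 : (A (a, b)).1 < q := by exact_mod_cast hx2
    have ha := (hA.sqCorner_head hc).1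
    have := (hhead a b (by omega) (by omega) (by omega) hb2 hc).1
    omega

theorem closure_rect_diff_subset_boldLines (hpq : p < q) (hrs : r < s)
    (hvert : ∀ b, r ≤ b → b < s → ∀ e, (e = p ∨ e = q) →
      ∃ a, aztecCell (n + 1) (a, b) ∧ (A (a, b)).1 = e)
    (hhor : ∀ a, p ≤ a → a < q → ∀ e, (e = r ∨ e = s) →
      ∃ b, aztecCell (n + 1) (a, b) ∧ (A (a, b)).2 = e) :
    closure (Ioo (p : ℝ) q ×ˢ Ioo (r : ℝ) s) \ Ioo (p : ℝ) q ×ˢ Ioo (r : ℝ) s ⊆ boldLines n A := by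
  have hpq' : (p : ℝ) < q := by exact_mod_cast hpq
  have hrs' : (r : ℝ) < s := by exact_mod_cast hrs
  rw [closure_prod_eq, closure_Ioo hpq'.ne, closure_Ioo hrs'.ne]
  rintro x ⟨⟨⟨hx1, hx2⟩, hx3, hx4⟩, hxR⟩
  have hside : (x.1 = p ∨ x.1 = q) ∨ x.2 = r ∨ x.2 = s := by
    by_contra! h
    exact hxR ⟨⟨hx1.lt_of_ne' h.1.1, hx2.lt_of_ne h.1.2⟩, hx3.lt_of_ne' h.2.1, hx4.lt_of_ne h.2.2⟩
  rcases hside with hside | hside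
  · obtain ⟨e, he, hxe⟩ : ∃ e : ℤ, (e = p ∨ e = q) ∧ x.1 = e := by
      rcases hside with h | h
      exacts [⟨p, Or.inl rfl, h⟩, ⟨q, Or.inr rfl, h⟩]
    obtain ⟨b, hb1, hb2, hb3, hb4⟩ := exists_unit_Icc_containing hrs hx3 hx4
    obtain ⟨a, hc, ha⟩ := hvert b hb1 hb2 e he
    exact mem_boldLines.2 ⟨(a, b), hc, Or.inr ⟨by rw [hxe, ha], hb3, hb4⟩⟩
  · obtain ⟨e, he, hxe⟩ : ∃ e : ℤ, (e = r ∨ e = s) ∧ x.2 = e := by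
      rcases hside with h | h
      exacts [⟨r, Or.inl rfl, h⟩, ⟨s, Or.inr rfl, h⟩]
    obtain ⟨a, ha1, ha2, ha3, ha4⟩ := exists_unit_Icc_containing hpq hx1 hx2
    obtain ⟨b, hc, hb⟩ := hhor a ha1 ha2 e he
    exact mem_boldLines.2 ⟨(a, b), hc, Or.inl ⟨ha3, ha4, by rw [hxe, hb]⟩⟩

theorem connectedComponentIn_rect (hA : IsArrowField n A) (hpq : p < q) (hrs : r < s)
    (hcell : ∀ a b, p ≤ a → a < q → r ≤ b → b < s → aztecCell (n + 1) (a, b) ∧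
      ((A (a, b)).1 = p ∨ (A (a, b)).1 = q) ∧ ((A (a, b)).2 = r ∨ (A (a, b)).2 = s))
    (hvert : ∀ b, r ≤ b → b < s → ∀ e, (e = p ∨ e = q) →
      ∃ a, aztecCell (n + 1) (a, b) ∧ (A (a, b)).1 = e)
    (hhor : ∀ a, p ≤ a → a < q → ∀ e, (e = r ∨ e = s) →
      ∃ b, aztecCell (n + 1) (a, b) ∧ (A (a, b)).2 = e)
    {x : ℝ × ℝ} (hx : x ∈ Ioo (p : ℝ) q ×ˢ Ioo (r : ℝ) s) :
    connectedComponentIn (aztecRegion (n + 1) \ boldLines n A) x =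
      Ioo (p : ℝ) q ×ˢ Ioo (r : ℝ) s := by
  have hRS : Ioo (p : ℝ) q ×ˢ Ioo (r : ℝ) s ⊆ aztecRegion (n + 1) \ boldLines n A :=
    subset_sdiff.2
      ⟨rect_subset_aztecRegion hpq hrs fun a b h1 h2 h3 h4 => (hcell a b h1 h2 h3 h4).1,
        disjoint_rect_boldLines hA fun a b h1 h2 h3 h4 _ => (hcell a b h1 h2 h3 h4).2⟩
  refine connectedComponentIn_eq_of_closure_inter_subset (isOpen_Ioo.prod isOpen_Ioo)
    (isPreconnected_Ioo.prod isPreconnected_Ioo) hRS ?_ hx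
  rintro y ⟨hycl, -, hyB⟩
  by_contra hyR
  exact hyB (closure_rect_diff_subset_boldLines hpq hrs hvert hhor ⟨hycl, hyR⟩)

end Rectangle

theorem connectedComponentIn_square (hA : IsArrowField n A) (hN : InteriorNode n (u, v))
    (haway : ∀ c, SqCorner c (u, v) → A c = oppCorner c (u, v)) {x : ℝ × ℝ}
    (hx : x ∈ Ioo ((u : ℝ) - 1) (u + 1) ×ˢ Ioo ((v : ℝ) - 1) (v + 1)) :
    connectedComponentIn (aztecRegion (n + 1) \ boldLines n A) x =
      Ioo ((u : ℝ) - 1) (u + 1) ×ˢ Ioo ((v : ℝ) - 1) (v + 1) := by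
  have hcell : ∀ a b, (a = u - 1 ∨ a = u) → (b = v - 1 ∨ b = v) →
      aztecCell (n + 1) (a, b) ∧ (A (a, b)).1 = 2 * a + 1 - u ∧ (A (a, b)).2 = 2 * b + 1 - v := by
    intro a b ha hb
    have hc : SqCorner (a, b) (u, v) := sqCorner_iff.2 ⟨ha, hb⟩
    exact ⟨hN.aztecCell hc, by simp [haway _ hc, oppCorner]⟩
  have key := connectedComponentIn_rect (p := u - 1) (q := u + 1) (r := v - 1) (s := v + 1) hA
    (by omega) (by omega) (x := x)
    (fun a b _ _ _ _ => by
      obtain ⟨hc, e1, e2⟩ := hcell a b (by omega) (by omega)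
      exact ⟨hc, by omega, by omega⟩)
    (fun b _ _ e he => by
      by_cases heu : e = u - 1
      · obtain ⟨hc, e1, -⟩ := hcell (u - 1) b (by omega) (by omega); exact ⟨_, hc, by omega⟩
      · obtain ⟨hc, e1, -⟩ := hcell u b (by omega) (by omega); exact ⟨_, hc, by omega⟩)
    (fun a _ _ e he => by
      by_cases hev : e = v - 1
      · obtain ⟨hc, -, e2⟩ := hcell a (v - 1) (by omega) (by omega); exact ⟨_, hc, by omega⟩
      · obtain ⟨hc, -, e2⟩ := hcell a v (by omega) (by omega); exact ⟨_, hc, by omega⟩)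
    (by push_cast; exact hx)
  push_cast at key
  exact key

theorem connectedComponentIn_horizontal_domino (hA : IsArrowField n A)
    (hN : InteriorNode n (u, v)) {b : ℤ} (hb : b = v - 1 ∨ b = v)
    (hrow : ∀ a, (a = u - 1 ∨ a = u) →
      A (a, b) = oppCorner (a, b) (u, v) ∧ A (a, 2 * v - 1 - b) = (u, v))
    {x : ℝ × ℝ} (hx : x ∈ Ioo ((u : ℝ) - 1) (u + 1) ×ˢ Ioo (b : ℝ) (b + 1)) :
    connectedComponentIn (aztecRegion (n + 1) \ boldLines n A) x =
      Ioo ((u : ℝ) - 1) (u + 1) ×ˢ Ioo (b : ℝ) (b + 1) := by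
  have hcell : ∀ a, (a = u - 1 ∨ a = u) →
      aztecCell (n + 1) (a, b) ∧ aztecCell (n + 1) (a, 2 * v - 1 - b) ∧
        (A (a, b)).1 = 2 * a + 1 - u ∧ (A (a, b)).2 = 2 * b + 1 - v ∧
        (A (a, 2 * v - 1 - b)).2 = v := by
    intro a ha
    refine ⟨hN.aztecCell (sqCorner_iff.2 ⟨ha, hb⟩),
      hN.aztecCell (sqCorner_iff.2 ⟨ha, by omega⟩), ?_⟩
    simp [(hrow a ha).1, (hrow a ha).2, oppCorner]
  have key := connectedComponentIn_rect (p := u - 1) (q := u + 1) (r := b) (s := b + 1) hA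
    (by omega) (by omega) (x := x)
    (fun a b' _ _ _ _ => by
      obtain ⟨hc, -, e1, e2, -⟩ := hcell a (by omega)
      obtain rfl : b' = b := by omega
      exact ⟨hc, by omega, by omega⟩)
    (fun b' _ _ e he => by
      obtain rfl : b' = b := by omega
      by_cases heu : e = u - 1
      · obtain ⟨hc, -, e1, -⟩ := hcell (u - 1) (by omega); exact ⟨_, hc, by omega⟩
      · obtain ⟨hc, -, e1, -⟩ := hcell u (by omega); exact ⟨_, hc, by omega⟩)
    (fun a _ _ e he => by
      obtain ⟨hc, hc', -, e2, e2'⟩ := hcell a (by omega)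
      by_cases hev : e = v
      exacts [⟨_, hc', by omega⟩, ⟨_, hc, by omega⟩])
    (by push_cast; exact hx)
  push_cast at key
  exact key

theorem connectedComponentIn_vertical_domino (hA : IsArrowField n A)
    (hN : InteriorNode n (u, v)) {a : ℤ} (ha : a = u - 1 ∨ a = u)
    (hcol : ∀ b, (b = v - 1 ∨ b = v) →
      A (a, b) = oppCorner (a, b) (u, v) ∧ A (2 * u - 1 - a, b) = (u, v))
    {x : ℝ × ℝ} (hx : x ∈ Ioo (a : ℝ) (a + 1) ×ˢ Ioo ((v : ℝ) - 1) (v + 1)) :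
    connectedComponentIn (aztecRegion (n + 1) \ boldLines n A) x =
      Ioo (a : ℝ) (a + 1) ×ˢ Ioo ((v : ℝ) - 1) (v + 1) := by
  have hcell : ∀ b, (b = v - 1 ∨ b = v) →
      aztecCell (n + 1) (a, b) ∧ aztecCell (n + 1) (2 * u - 1 - a, b) ∧
        (A (a, b)).1 = 2 * a + 1 - u ∧ (A (a, b)).2 = 2 * b + 1 - v ∧
        (A (2 * u - 1 - a, b)).1 = u := by
    intro b hb
    refine ⟨hN.aztecCell (sqCorner_iff.2 ⟨ha, hb⟩),
      hN.aztecCell (sqCorner_iff.2 ⟨by omega, hb⟩), ?_⟩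
    simp [(hcol b hb).1, (hcol b hb).2, oppCorner]
  have key := connectedComponentIn_rect (p := a) (q := a + 1) (r := v - 1) (s := v + 1) hA
    (by omega) (by omega) (x := x)
    (fun a' b _ _ _ _ => by
      obtain ⟨hc, -, e1, e2, -⟩ := hcell b (by omega)
      obtain rfl : a' = a := by omega
      exact ⟨hc, by omega, by omega⟩)
    (fun b _ _ e he => by
      obtain ⟨hc, hc', e1, -, e1'⟩ := hcell b (by omega)
      by_cases heu : e = u
      exacts [⟨_, hc', by omega⟩, ⟨_, hc, by omega⟩])
    (fun a' _ _ e he => by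
      obtain rfl : a' = a := by omega
      by_cases hev : e = v - 1
      · obtain ⟨hc, -, -, e2, -⟩ := hcell (v - 1) (by omega); exact ⟨_, hc, by omega⟩
      · obtain ⟨hc, -, -, e2, -⟩ := hcell v (by omega); exact ⟨_, hc, by omega⟩)
    (by push_cast; exact hx)
  push_cast at key
  exact key

def IsDominoOrRepellingSquare (n : ℕ) (A : ℤ × ℤ → ℤ × ℤ) (R : Set (ℝ × ℝ)) : Prop :=
  ∃ k l : ℤ,
    R = Ioo (k : ℝ) (k + 2) ×ˢ Ioo (l : ℝ) (l + 1) ∨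
    R = Ioo (k : ℝ) (k + 1) ×ˢ Ioo (l : ℝ) (l + 2) ∨
    (R = Ioo ((k : ℝ) - 1) (k + 1) ×ˢ Ioo ((l : ℝ) - 1) (l + 1) ∧
      InteriorNode n (k, l) ∧ Repelling A (k, l))

theorem isDominoOrRepellingSquare_of_pointsAway (hA : IsArrowField n A) {a b : ℤ}
    (hN : InteriorNode n (u, v)) (hc : SqCorner (a, b) (u, v))
    (haway : A (a, b) = oppCorner (a, b) (u, v)) :
    IsDominoOrRepellingSquare n A
      (connectedComponentIn (aztecRegion (n + 1) \ boldLines n A)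
        ((a : ℝ) + 1 / 2, (b : ℝ) + 1 / 2)) := by
  have hab := sqCorner_iff.1 hc
  have ha : (u : ℝ) - 1 ≤ a ∧ (a : ℝ) ≤ u := by
    constructor <;> [exact_mod_cast (by omega : u - 1 ≤ a); exact_mod_cast (by omega : a ≤ u)]
  have hb : (v : ℝ) - 1 ≤ b ∧ (b : ℝ) ≤ v := by
    constructor <;> [exact_mod_cast (by omega : v - 1 ≤ b); exact_mod_cast (by omega : b ≤ v)]
  rcases hA.2 (u, v) hN with hatt | hrep | htr
  · have := haway.symm.trans (hatt.head_eq hc)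
    simp only [oppCorner, Prod.ext_iff] at this
    omega
  · refine ⟨u, v, Or.inr (Or.inr ⟨?_, hN, hrep⟩)⟩
    exact connectedComponentIn_square hA hN (fun c hc => hrep.head_eq hc)
      ⟨⟨by linarith, by linarith⟩, by linarith, by linarith⟩
  · rcases htr.away_domino hA hN hc haway with hrow | hcol
    · refine ⟨u - 1, b, Or.inl ?_⟩
      rw [connectedComponentIn_horizontal_domino hA hN hab.2 hrow
        ⟨⟨by linarith, by linarith⟩, by linarith, by linarith⟩]
      push_cast; ring_nf
    · refine ⟨a, v - 1, Or.inr (Or.inl ?_)⟩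
      rw [connectedComponentIn_vertical_domino hA hN hab.1 hcol
        ⟨⟨by linarith, by linarith⟩, by linarith, by linarith⟩]
      push_cast; ring_nf

theorem connectedComponentIn_eq_center (hA : IsArrowField n A) {c : ℤ × ℤ}
    (hc : aztecCell (n + 1) c) {x : ℝ × ℝ} (hx : x ∈ aztecRegion (n + 1) \ boldLines n A)
    (hxc : x ∈ cellRegion c) :
    connectedComponentIn (aztecRegion (n + 1) \ boldLines n A) x =
      connectedComponentIn (aztecRegion (n + 1) \ boldLines n A)
        ((c.1 : ℝ) + 1 / 2, (c.2 : ℝ) + 1 / 2) := by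
  obtain ⟨a, b⟩ := c
  have hRS : Ioo (a : ℝ) (a + 1) ×ˢ Ioo (b : ℝ) (b + 1) ⊆ aztecRegion (n + 1) \ boldLines n A := by
    have hreg := rect_subset_aztecRegion (n := n) (p := a) (q := a + 1) (r := b) (s := b + 1)
      (by omega) (by omega) fun a' b' _ _ _ _ => by
        obtain ⟨rfl, rfl⟩ : a' = a ∧ b' = b := by omega
        exact hc
    have hdisj := disjoint_rect_boldLines (p := a) (q := a + 1) (r := b) (s := b + 1) hA
      fun a' b' _ _ _ _ hc' => by
        obtain ⟨rfl, rfl⟩ : a' = a ∧ b' = b := by omega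
        exact hA.sqCorner_head hc'
    push_cast at hreg hdisj
    exact subset_sdiff.2 ⟨hreg, hdisj⟩
  have hcl : closure (Ioo (a : ℝ) (a + 1) ×ˢ Ioo (b : ℝ) (b + 1)) = cellRegion (a, b) := by
    rw [closure_prod_eq, closure_Ioo (by linarith), closure_Ioo (by linarith)]; rfl
  have hpre : IsPreconnected (insert x (Ioo (a : ℝ) (a + 1) ×ˢ Ioo (b : ℝ) (b + 1))) :=
    (isPreconnected_Ioo.prod isPreconnected_Ioo).subset_closure (subset_insert _ _)
      (insert_subset_iff.2 ⟨hcl ▸ hxc, subset_closure⟩)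
  refine connectedComponentIn_eq (hpre.subset_connectedComponentIn (mem_insert _ _)
    (insert_subset_iff.2 ⟨hx, hRS⟩) (mem_insert_of_mem _ ?_))
  exact ⟨⟨by linarith, by linarith⟩, by linarith, by linarith⟩

theorem isDominoOrRepellingSquare_center (hA : IsArrowField n A) (hout : Outward n A) (hn : 1 ≤ n)
    {c : ℤ × ℤ} (hc : aztecCell (n + 1) c) :
    IsDominoOrRepellingSquare n A
      (connectedComponentIn (aztecRegion (n + 1) \ boldLines n A)
        ((c.1 : ℝ) + 1 / 2, (c.2 : ℝ) + 1 / 2)) := by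
  obtain ⟨⟨u, v⟩, hT⟩ : ∃ T, T = oppCorner c (A c) := ⟨_, rfl⟩
  have hN : InteriorNode n (u, v) := hT ▸ interiorNode_oppCorner_head hA hout hn hc
  have hhead := hA.sqCorner_head hc
  obtain ⟨a, b⟩ := c
  simp only [oppCorner, Prod.ext_iff] at hT
  refine isDominoOrRepellingSquare_of_pointsAway hA hN ?_ ?_
  · simp only [SqCorner] at hhead ⊢; omega
  · simp only [oppCorner, Prod.ext_iff]; omega

/-- For an outward pointing field of arrows `A` on `A_{n+1}`, every connected component
of `A_{n+1} \ B` is the interior of a `1×2` (or `2×1`) rectangle or of a `2×2` square,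
and the `2×2` square components are exactly the `2×2` squares centered at the repelling
nodes of `A`. -/
theorem components_of_bold_complement (n : ℕ) (hn : 1 ≤ n) (A : ℤ × ℤ → ℤ × ℤ)
    (hA : IsArrowField n A) (hout : Outward n A) :
    (∀ x ∈ aztecRegion (n + 1) \ boldLines n A,
      ∃ k l : ℤ,
        connectedComponentIn (aztecRegion (n + 1) \ boldLines n A) x =
            Set.Ioo (k : ℝ) (k + 2) ×ˢ Set.Ioo (l : ℝ) (l + 1) ∨
        connectedComponentIn (aztecRegion (n + 1) \ boldLines n A) x =
            Set.Ioo (k : ℝ) (k + 1) ×ˢ Set.Ioo (l : ℝ) (l + 2) ∨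
        (connectedComponentIn (aztecRegion (n + 1) \ boldLines n A) x =
            Set.Ioo ((k : ℝ) - 1) (k + 1) ×ˢ Set.Ioo ((l : ℝ) - 1) (l + 1) ∧
          InteriorNode n (k, l) ∧ Repelling A (k, l))) ∧
    (∀ N : ℤ × ℤ, InteriorNode n N → Repelling A N →
      connectedComponentIn (aztecRegion (n + 1) \ boldLines n A)
          ((N.1 : ℝ) - 1 / 2, (N.2 : ℝ) - 1 / 2) =
        Set.Ioo ((N.1 : ℝ) - 1) (N.1 + 1) ×ˢ Set.Ioo ((N.2 : ℝ) - 1) (N.2 + 1)) := by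
  refine ⟨fun x hx => ?_, fun ⟨u, v⟩ hN hrep => ?_⟩
  · obtain ⟨c, hc, hxc⟩ := mem_aztecRegion.1 hx.1
    rw [connectedComponentIn_eq_center hA hc hx hxc]
    exact isDominoOrRepellingSquare_center hA hout hn hc
  · exact connectedComponentIn_square hA hN (fun c hc => hrep.head_eq hc)
      ⟨⟨by linarith, by linarith⟩, by linarith, by linarith⟩
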